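/- Let A be a commutative ring, I and L ideals of A, and I' ⊆ I an ideal. Then there exists an injective A-linear map from Q_{A/I'}(L,I) into Q(L,I). -/

import Mathlib

open Submodule

variable (A : Type*) [CommRing A]

/-- The natural map `I/(I² + I·L) → (I+L)/(I² + L)` induced by the inclusion `I ⊆ I + L`. -/
noncomputable def qIota (L I : Ideal A) :
    (↥I ⧸ Submodule.comap I.subtype (I ^ 2 + I * L)) →ₗ[A]
      (↥(I + L) ⧸ Submodule.comap (I + L).subtype (I ^ 2 + L)) :=
  Submodule.liftQ _
    ((Submodule.comap (I + L).subtype (I ^ 2 + L)).mkQ.comp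
      (Submodule.inclusion (le_sup_left : I ≤ I + L)))
    (by
      intro x hx
      have hle : I ^ 2 + I * L ≤ I ^ 2 + L := by
        rw [Submodule.add_eq_sup, Submodule.add_eq_sup]
        exact sup_le_sup_left (Ideal.mul_le_inf.trans inf_le_right) _
      simp only [LinearMap.mem_ker, LinearMap.comp_apply, Submodule.mkQ_apply,
        Submodule.Quotient.mk_eq_zero, Submodule.mem_comap, Submodule.coe_subtype,
        Submodule.coe_inclusion]
      exact hle hx)

/-- The restriction map `Hom_A((I+L)/(I²+L), A/(I+L)) → Hom_A(I/(I²+I·L), A/(I+L))`. -/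
noncomputable def qRes (L I : Ideal A) :
    ((↥(I + L) ⧸ Submodule.comap (I + L).subtype (I ^ 2 + L)) →ₗ[A] A ⧸ (I + L)) →ₗ[A]
      ((↥I ⧸ Submodule.comap I.subtype (I ^ 2 + I * L)) →ₗ[A] A ⧸ (I + L)) :=
  LinearMap.lcomp A (A ⧸ (I + L)) (qIota A L I)

/-- The module `Q(L,I)`: the cokernel of the restriction map
`Hom_A((I+L)/(I²+L), A/(I+L)) → Hom_A(I/(I²+I·L), A/(I+L))`. -/
noncomputable abbrev Qmod (L I : Ideal A) :=
  ((↥I ⧸ Submodule.comap I.subtype (I ^ 2 + I * L)) →ₗ[A] A ⧸ (I + L)) ⧸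
    LinearMap.range (qRes A L I)


section
variable {A : Type*} [CommRing A] (I L I' : Ideal A) (hI' : I' ≤ I)
noncomputable def eRing : ((A ⧸ I') ⧸ (I.map (Ideal.Quotient.mk I') + L.map (Ideal.Quotient.mk I'))) ≃+* A ⧸ (I + L) :=
  (Ideal.quotEquivOfEq (Ideal.map_sup (Ideal.Quotient.mk I') I L).symm).trans
    (DoubleQuot.quotQuotEquivQuotOfLE (hI'.trans le_sup_left))

lemma eRing_mk (a : A) : eRing I L I' hI' (Ideal.Quotient.mk _ (Ideal.Quotient.mk I' a)) = Ideal.Quotient.mk _ a := by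
  simp only [eRing, RingEquiv.trans_apply, Ideal.quotEquivOfEq_mk]
  rfl

noncomputable def eLin : ((A ⧸ I') ⧸ (I.map (Ideal.Quotient.mk I') + L.map (Ideal.Quotient.mk I'))) ≃ₗ[A] A ⧸ (I + L) :=
  { eRing I L I' hI' with
    map_smul' := by
      intro a x
      obtain ⟨b, rfl⟩ := Ideal.Quotient.mk_surjective x
      obtain ⟨c, rfl⟩ := Ideal.Quotient.mk_surjective b
      show eRing I L I' hI' (Ideal.Quotient.mk _ (Ideal.Quotient.mk I' (a * c))) = _
      rw [eRing_mk]; rfl }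

noncomputable def toMbar (x : ↥I) :
    ↥(I.map (Ideal.Quotient.mk I')) ⧸ comap (I.map (Ideal.Quotient.mk I')).subtype
      ((I.map (Ideal.Quotient.mk I'))^2 + (I.map (Ideal.Quotient.mk I')) * (L.map (Ideal.Quotient.mk I'))) :=
  Submodule.Quotient.mk ⟨Ideal.Quotient.mk I' x, Ideal.mem_map_of_mem _ x.2⟩

lemma toMbar_add (x y : ↥I) : toMbar I L I' (x + y) = toMbar I L I' x + toMbar I L I' y := by
  rw [toMbar, toMbar, toMbar, ← Submodule.Quotient.mk_add]
  exact congrArg _ (Subtype.ext (by simp))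

lemma toMbar_smul (a : A) (x : ↥I) :
    toMbar I L I' (a • x) = a • toMbar I L I' x := by
  rw [toMbar, toMbar]
  have h : (⟨Ideal.Quotient.mk I' ↑(a • x), Ideal.mem_map_of_mem _ (a • x).2⟩ :
      ↥(I.map (Ideal.Quotient.mk I'))) = (Ideal.Quotient.mk I' a) • ⟨Ideal.Quotient.mk I' ↑x, Ideal.mem_map_of_mem _ x.2⟩ :=
    Subtype.ext (by simp)
  rw [h, Submodule.Quotient.mk_smul]
  rfl

lemma mem_bar {x : A} (hx : x ∈ I^2 + I*L) :
    Ideal.Quotient.mk I' x ∈ (I.map (Ideal.Quotient.mk I'))^2 + (I.map (Ideal.Quotient.mk I')) * (L.map (Ideal.Quotient.mk I')) := by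
  have h : (I.map (Ideal.Quotient.mk I'))^2 + (I.map (Ideal.Quotient.mk I')) * (L.map (Ideal.Quotient.mk I'))
      = (I^2 + I*L).map (Ideal.Quotient.mk I') := by
    simp [Submodule.add_eq_sup, Ideal.map_sup, Ideal.map_pow, Ideal.map_mul]
  rw [h]
  exact Ideal.mem_map_of_mem _ hx

noncomputable def Tmap
    (φ : (↥(I.map (Ideal.Quotient.mk I')) ⧸ comap (I.map (Ideal.Quotient.mk I')).subtype
        ((I.map (Ideal.Quotient.mk I'))^2 + (I.map (Ideal.Quotient.mk I')) * (L.map (Ideal.Quotient.mk I'))))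
      →ₗ[A ⧸ I'] ((A ⧸ I') ⧸ (I.map (Ideal.Quotient.mk I') + L.map (Ideal.Quotient.mk I')))) :
    (↥I ⧸ comap I.subtype (I ^ 2 + I * L)) →ₗ[A] A ⧸ (I + L) :=
  Submodule.liftQ _
    { toFun := fun x => eLin I L I' hI' (φ (toMbar I L I' x))
      map_add' := by intro x y; simp only [toMbar_add, map_add]
      map_smul' := by
        intro a x
        show eLin I L I' hI' (φ (toMbar I L I' (a • x))) = a • eLin I L I' hI' (φ (toMbar I L I' x))
        rw [toMbar_smul]
        have h2 : φ (a • toMbar I L I' x) = a • φ (toMbar I L I' x) :=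
          φ.map_smul (Ideal.Quotient.mk I' a) _
        rw [h2, (eLin I L I' hI').map_smul a] }
    (by
      intro x hx
      have h0 : toMbar I L I' x = 0 := by
        rw [toMbar, Submodule.Quotient.mk_eq_zero]
        exact mem_bar I L I' hx
      show eLin I L I' hI' (φ (toMbar I L I' x)) = 0
      rw [h0, φ.map_zero, (eLin I L I' hI').map_zero])

lemma Tmap_mk (φ) (x : ↥I) :
    Tmap I L I' hI' φ (Submodule.Quotient.mk x) = eLin I L I' hI' (φ (toMbar I L I' x)) := rfl

lemma mem_barJ {x : A} (hx : x ∈ I + L) :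
    Ideal.Quotient.mk I' x ∈ I.map (Ideal.Quotient.mk I') + L.map (Ideal.Quotient.mk I') := by
  have h : I.map (Ideal.Quotient.mk I') + L.map (Ideal.Quotient.mk I')
      = (I + L).map (Ideal.Quotient.mk I') := by
    simp [Submodule.add_eq_sup, Ideal.map_sup]
  rw [h]
  exact Ideal.mem_map_of_mem _ hx

noncomputable def toNbar (x : ↥(I + L)) :
    ↥(I.map (Ideal.Quotient.mk I') + L.map (Ideal.Quotient.mk I')) ⧸
      comap (I.map (Ideal.Quotient.mk I') + L.map (Ideal.Quotient.mk I')).subtype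
        ((I.map (Ideal.Quotient.mk I'))^2 + L.map (Ideal.Quotient.mk I')) :=
  Submodule.Quotient.mk ⟨Ideal.Quotient.mk I' x, mem_barJ I L I' x.2⟩

lemma toNbar_add (x y : ↥(I + L)) : toNbar I L I' (x + y) = toNbar I L I' x + toNbar I L I' y := by
  rw [toNbar, toNbar, toNbar, ← Submodule.Quotient.mk_add]
  exact congrArg _ (Subtype.ext (by simp))

lemma toNbar_smul (a : A) (x : ↥(I + L)) :
    toNbar I L I' (a • x) = a • toNbar I L I' x := by
  rw [toNbar, toNbar]
  have h : (⟨Ideal.Quotient.mk I' ↑(a • x), mem_barJ I L I' (a • x).2⟩ :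
      ↥(I.map (Ideal.Quotient.mk I') + L.map (Ideal.Quotient.mk I'))) =
      (Ideal.Quotient.mk I' a) • ⟨Ideal.Quotient.mk I' ↑x, mem_barJ I L I' x.2⟩ := Subtype.ext (by simp)
  rw [h, Submodule.Quotient.mk_smul]
  rfl

lemma mem_bar2 {x : A} (hx : x ∈ I^2 + L) :
    Ideal.Quotient.mk I' x ∈ (I.map (Ideal.Quotient.mk I'))^2 + L.map (Ideal.Quotient.mk I') := by
  have h : (I.map (Ideal.Quotient.mk I'))^2 + L.map (Ideal.Quotient.mk I')
      = (I^2 + L).map (Ideal.Quotient.mk I') := by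
    simp [Submodule.add_eq_sup, Ideal.map_sup, Ideal.map_pow]
  rw [h]
  exact Ideal.mem_map_of_mem _ hx

noncomputable def Smap
    (ψ : (↥(I.map (Ideal.Quotient.mk I') + L.map (Ideal.Quotient.mk I')) ⧸
        comap (I.map (Ideal.Quotient.mk I') + L.map (Ideal.Quotient.mk I')).subtype
          ((I.map (Ideal.Quotient.mk I'))^2 + L.map (Ideal.Quotient.mk I')))
      →ₗ[A ⧸ I'] ((A ⧸ I') ⧸ (I.map (Ideal.Quotient.mk I') + L.map (Ideal.Quotient.mk I')))) :
    (↥(I + L) ⧸ comap (I + L).subtype (I ^ 2 + L)) →ₗ[A] A ⧸ (I + L) :=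
  Submodule.liftQ _
    { toFun := fun x => eLin I L I' hI' (ψ (toNbar I L I' x))
      map_add' := by intro x y; simp only [toNbar_add, map_add]
      map_smul' := by
        intro a x
        show eLin I L I' hI' (ψ (toNbar I L I' (a • x))) = a • eLin I L I' hI' (ψ (toNbar I L I' x))
        rw [toNbar_smul]
        have h2 : ψ (a • toNbar I L I' x) = a • ψ (toNbar I L I' x) :=
          ψ.map_smul (Ideal.Quotient.mk I' a) _
        rw [h2, (eLin I L I' hI').map_smul a] }
    (by
      intro x hx
      have h0 : toNbar I L I' x = 0 := by
        rw [toNbar, Submodule.Quotient.mk_eq_zero]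
        exact mem_bar2 I L I' hx
      show eLin I L I' hI' (ψ (toNbar I L I' x)) = 0
      rw [h0, ψ.map_zero, (eLin I L I' hI').map_zero])

lemma Smap_mk (ψ) (x : ↥(I + L)) :
    Smap I L I' hI' ψ (Submodule.Quotient.mk x) = eLin I L I' hI' (ψ (toNbar I L I' x)) := rfl

lemma qIota_mk (x : ↥I) :
    qIota A L I (Submodule.Quotient.mk x) =
      Submodule.Quotient.mk (Submodule.inclusion (le_sup_left : I ≤ I + L) x) := rfl

lemma step5 (ψ) :
    Tmap I L I' hI' (qRes (A ⧸ I') (L.map (Ideal.Quotient.mk I')) (I.map (Ideal.Quotient.mk I')) ψ)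
      = qRes A L I (Smap I L I' hI' ψ) := by
  apply Submodule.linearMap_qext
  ext x
  show eLin I L I' hI' ((ψ ∘ₗ qIota (A ⧸ I') (L.map (Ideal.Quotient.mk I')) (I.map (Ideal.Quotient.mk I'))) (toMbar I L I' x)) =
    Smap I L I' hI' ψ (qIota A L I (Submodule.Quotient.mk x))
  rw [qIota_mk, Smap_mk]
  congr 2

noncomputable def qmap : ↥(I + L) →ₗ[A]
    (↥(I.map (Ideal.Quotient.mk I') + L.map (Ideal.Quotient.mk I')) ⧸
      comap (I.map (Ideal.Quotient.mk I') + L.map (Ideal.Quotient.mk I')).subtype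
        ((I.map (Ideal.Quotient.mk I'))^2 + L.map (Ideal.Quotient.mk I'))) :=
  { toFun := toNbar I L I'
    map_add' := toNbar_add I L I'
    map_smul' := toNbar_smul I L I' }

lemma qmap_surj : Function.Surjective (qmap I L I') := by
  intro n
  obtain ⟨yb, rfl⟩ := Submodule.Quotient.mk_surjective _ n
  have hy : (yb : A ⧸ I') ∈ (I + L).map (Ideal.Quotient.mk I') := by
    have h : I.map (Ideal.Quotient.mk I') + L.map (Ideal.Quotient.mk I')
        = (I + L).map (Ideal.Quotient.mk I') := by
      simp [Submodule.add_eq_sup, Ideal.map_sup]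
    exact h ▸ yb.2
  obtain ⟨y, hy1, hy2⟩ := (Ideal.mem_map_iff_of_surjective _ Ideal.Quotient.mk_surjective).1 hy
  refine ⟨⟨y, hy1⟩, ?_⟩
  show Submodule.Quotient.mk _ = Submodule.Quotient.mk yb
  exact congrArg _ (Subtype.ext hy2)

-- any element of I' is killed by ψ whenever qRes ψ = Tmap φ
lemma psi_kills (φ) (ψ : (↥(I + L) ⧸ comap (I + L).subtype (I ^ 2 + L)) →ₗ[A] A ⧸ (I + L))
    (hψ : qRes A L I ψ = Tmap I L I' hI' φ) {w : A} (hw : w ∈ I') :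
    ψ (Submodule.Quotient.mk ⟨w, Submodule.mem_sup_left (hI' hw)⟩) = 0 := by
  have hwI : w ∈ I := hI' hw
  have h1 : (Submodule.Quotient.mk ⟨w, Submodule.mem_sup_left hwI⟩ :
      ↥(I + L) ⧸ comap (I + L).subtype (I ^ 2 + L)) =
      qIota A L I (Submodule.Quotient.mk ⟨w, hwI⟩) := rfl
  rw [h1]
  have h2 : ψ (qIota A L I (Submodule.Quotient.mk ⟨w, hwI⟩))
      = qRes A L I ψ (Submodule.Quotient.mk ⟨w, hwI⟩) := rfl
  rw [h2, hψ, Tmap_mk]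
  have h3 : toMbar I L I' ⟨w, hwI⟩ = 0 := by
    rw [toMbar]
    have : (⟨Ideal.Quotient.mk I' w, Ideal.mem_map_of_mem _ hwI⟩ :
        ↥(I.map (Ideal.Quotient.mk I'))) = 0 := by
      ext
      simpa [Ideal.Quotient.eq_zero_iff_mem] using hw
    rw [this, Submodule.Quotient.mk_eq_zero]
    exact Submodule.zero_mem _
  rw [h3, φ.map_zero, (eLin I L I' hI').map_zero]

set_option maxHeartbeats 1600000 in
lemma step6
    (φ : (↥(I.map (Ideal.Quotient.mk I')) ⧸ comap (I.map (Ideal.Quotient.mk I')).subtype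
        ((I.map (Ideal.Quotient.mk I'))^2 + (I.map (Ideal.Quotient.mk I')) * (L.map (Ideal.Quotient.mk I'))))
      →ₗ[A ⧸ I'] ((A ⧸ I') ⧸ (I.map (Ideal.Quotient.mk I') + L.map (Ideal.Quotient.mk I'))))
    (ψ : (↥(I + L) ⧸ comap (I + L).subtype (I ^ 2 + L)) →ₗ[A] A ⧸ (I + L))
    (hψ : qRes A L I ψ = Tmap I L I' hI' φ) :
    ∃ ψbar, qRes (A ⧸ I') (L.map (Ideal.Quotient.mk I')) (I.map (Ideal.Quotient.mk I')) ψbar = φ := by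
  classical
  set ψ'' : ↥(I + L) →ₗ[A] ((A ⧸ I') ⧸ (I.map (Ideal.Quotient.mk I') + L.map (Ideal.Quotient.mk I'))) :=
    (eLin I L I' hI').symm.toLinearMap ∘ₗ ψ ∘ₗ (comap (I + L).subtype (I ^ 2 + L)).mkQ with hψ''
  have hker : LinearMap.ker (qmap I L I') ≤ LinearMap.ker ψ'' := by
    intro x hx
    have hx' : Ideal.Quotient.mk I' (x : A) ∈
        (I.map (Ideal.Quotient.mk I'))^2 + L.map (Ideal.Quotient.mk I') := by
      have : toNbar I L I' x = 0 := hx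
      rw [toNbar, Submodule.Quotient.mk_eq_zero] at this
      exact this
    have heq : (I.map (Ideal.Quotient.mk I'))^2 + L.map (Ideal.Quotient.mk I')
        = (I^2 + L).map (Ideal.Quotient.mk I') := by
      simp [Submodule.add_eq_sup, Ideal.map_sup, Ideal.map_pow]
    rw [heq, Ideal.mem_quotient_iff_mem_sup] at hx'
    obtain ⟨z, hz, w, hw, hzw⟩ := Submodule.mem_sup.1 hx'
    have hzIL : z ∈ I + L := by
      have hle : I ^ 2 + L ≤ I + L := sup_le (le_trans (Ideal.pow_le_self two_ne_zero) le_sup_left) le_sup_right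
      exact hle hz
    have hxsplit : (x : ↥(I + L)) = ⟨z, hzIL⟩ + ⟨w, Submodule.mem_sup_left (hI' hw)⟩ := by
      ext; simp [← hzw]
    show ψ'' x = 0
    rw [hψ'']
    simp only [LinearMap.comp_apply, Submodule.mkQ_apply]
    have : ψ (Submodule.Quotient.mk x) = 0 := by
      rw [hxsplit, Submodule.Quotient.mk_add, map_add]
      have hz0 : ψ (Submodule.Quotient.mk ⟨z, hzIL⟩) = 0 := by
        have : (Submodule.Quotient.mk (⟨z, hzIL⟩ : ↥(I + L)) :
            ↥(I + L) ⧸ comap (I + L).subtype (I ^ 2 + L)) = 0 := by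
          rw [Submodule.Quotient.mk_eq_zero]; exact hz
        rw [this, map_zero]
      rw [hz0, psi_kills I L I' hI' φ ψ hψ hw, add_zero]
    rw [this, map_zero]
  have hsurj := qmap_surj I L I'
  set Neq := LinearMap.quotKerEquivOfSurjective (qmap I L I') hsurj with hNeq
  set ψA := (Submodule.liftQ _ ψ'' hker) ∘ₗ Neq.symm.toLinearMap with hψA
  have key : ∀ y : ↥(I + L), ψA (qmap I L I' y) = ψ'' y := by
    intro y
    have h1 : Neq (Submodule.Quotient.mk y) = qmap I L I' y := rfl
    have h2 : Neq.symm (qmap I L I' y) = Submodule.Quotient.mk y := by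
      rw [← h1, LinearEquiv.symm_apply_apply]
    rw [hψA]
    simp only [LinearMap.comp_apply, LinearEquiv.coe_toLinearMap, h2, Submodule.liftQ_apply]
  refine ⟨{ toFun := ψA
            map_add' := ψA.map_add
            map_smul' := ?_ }, ?_⟩
  · intro b m
    obtain ⟨a, rfl⟩ := Ideal.Quotient.mk_surjective b
    exact ψA.map_smul a m
  · apply Submodule.linearMap_qext
    ext mb
    obtain ⟨x, hxI, hx2⟩ := (Ideal.mem_map_iff_of_surjective _ Ideal.Quotient.mk_surjective).1 mb.2
    show ψA (qIota (A ⧸ I') (L.map (Ideal.Quotient.mk I')) (I.map (Ideal.Quotient.mk I')) (Submodule.Quotient.mk mb)) = φ (Submodule.Quotient.mk mb)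
    have h4 : qIota (A ⧸ I') (L.map (Ideal.Quotient.mk I')) (I.map (Ideal.Quotient.mk I')) (Submodule.Quotient.mk mb)
        = qmap I L I' ⟨x, Submodule.mem_sup_left hxI⟩ := by
      show Submodule.Quotient.mk _ = Submodule.Quotient.mk _
      exact congrArg _ (Subtype.ext (by simp [hx2]))
    rw [h4, key]
    have h5 : ψ'' ⟨x, Submodule.mem_sup_left hxI⟩
        = (eLin I L I' hI').symm (ψ (Submodule.Quotient.mk ⟨x, Submodule.mem_sup_left hxI⟩)) := rfl
    have h6 : ψ (Submodule.Quotient.mk ⟨x, Submodule.mem_sup_left hxI⟩)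
        = qRes A L I ψ (Submodule.Quotient.mk ⟨x, hxI⟩) := rfl
    rw [h5, h6, hψ, Tmap_mk, LinearEquiv.symm_apply_apply]
    congr 1
    rw [toMbar]
    exact congrArg _ (Subtype.ext hx2)

set_option synthInstance.maxHeartbeats 1000000 in
lemma Tmap_sub (φ φ') :
    Tmap I L I' hI' (φ - φ') = Tmap I L I' hI' φ - Tmap I L I' hI' φ' := by
  apply Submodule.linearMap_qext
  ext x
  simp only [LinearMap.comp_apply, Submodule.mkQ_apply, LinearMap.sub_apply, Tmap_mk,
    LinearMap.sub_apply, map_sub]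

lemma Tmap_smul (a : A) (φ) :
    Tmap I L I' hI' (Ideal.Quotient.mk I' a • φ) = a • Tmap I L I' hI' φ := by
  apply Submodule.linearMap_qext
  ext x
  show eLin I L I' hI' ((Ideal.Quotient.mk I' a • φ) (toMbar I L I' x))
    = a • eLin I L I' hI' (φ (toMbar I L I' x))
  rw [LinearMap.smul_apply]
  have h : (Ideal.Quotient.mk I' a) • φ (toMbar I L I' x) = a • φ (toMbar I L I' x) := rfl
  rw [h, (eLin I L I' hI').map_smul a]

/-- the induced map on the `Q` modules -/
noncomputable def Fmap :
    Qmod (A ⧸ I') (L.map (Ideal.Quotient.mk I')) (I.map (Ideal.Quotient.mk I')) → Qmod A L I :=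
  fun q => Quotient.liftOn q (fun φ => Submodule.Quotient.mk (Tmap I L I' hI' φ))
    (by
      intro φ φ' h
      have hmem : φ - φ' ∈ LinearMap.range
          (qRes (A ⧸ I') (L.map (Ideal.Quotient.mk I')) (I.map (Ideal.Quotient.mk I'))) :=
        (Submodule.quotientRel_def _).1 h
      obtain ⟨ψ, hψ⟩ := hmem
      apply (Submodule.Quotient.eq _).2
      rw [← Tmap_sub, ← hψ, step5]
      exact ⟨Smap I L I' hI' ψ, rfl⟩)

lemma Fmap_mk (φ) :
    Fmap I L I' hI' (Submodule.Quotient.mk φ) = Submodule.Quotient.mk (Tmap I L I' hI' φ) := rfl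

lemma Fmap_inj : Function.Injective (Fmap I L I' hI') := by
  intro q q' h
  obtain ⟨φ, rfl⟩ := Submodule.Quotient.mk_surjective _ q
  obtain ⟨φ', rfl⟩ := Submodule.Quotient.mk_surjective _ q'
  rw [Fmap_mk, Fmap_mk] at h
  have hmem := (Submodule.Quotient.eq _).1 h
  rw [← Tmap_sub] at hmem
  obtain ⟨ψ, hψ⟩ := hmem
  obtain ⟨ψbar, hψbar⟩ := step6 I L I' hI' (φ - φ') ψ hψ
  apply (Submodule.Quotient.eq _).2
  exact ⟨ψbar, hψbar⟩

set_option synthInstance.maxHeartbeats 1000000 in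
lemma Tmap_add (φ φ') :
    Tmap I L I' hI' (φ + φ') = Tmap I L I' hI' φ + Tmap I L I' hI' φ' := by
  apply Submodule.linearMap_qext
  ext x
  simp only [LinearMap.comp_apply, Submodule.mkQ_apply, LinearMap.add_apply, Tmap_mk, map_add]

lemma Fmap_add (q q') :
    Fmap I L I' hI' (q + q') = Fmap I L I' hI' q + Fmap I L I' hI' q' := by
  obtain ⟨φ, rfl⟩ := Submodule.Quotient.mk_surjective _ q
  obtain ⟨φ', rfl⟩ := Submodule.Quotient.mk_surjective _ q'
  rw [← Submodule.Quotient.mk_add, Fmap_mk, Fmap_mk, Fmap_mk, Tmap_add,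
    Submodule.Quotient.mk_add]

lemma Fmap_smul (a : A) (q) :
    Fmap I L I' hI' (Ideal.Quotient.mk I' a • q) = a • Fmap I L I' hI' q := by
  obtain ⟨φ, rfl⟩ := Submodule.Quotient.mk_surjective _ q
  rw [← Submodule.Quotient.mk_smul, Fmap_mk, Fmap_mk, Tmap_smul, Submodule.Quotient.mk_smul]
end

set_option maxHeartbeats 1600000 in
theorem fibers_stmt3 {A : Type*} [CommRing A] (I L I' : Ideal A) (hI' : I' ≤ I) :
    ∃ f : RestrictScalars A (A ⧸ I')
          (Qmod (A ⧸ I') (L.map (Ideal.Quotient.mk I')) (I.map (Ideal.Quotient.mk I')))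
        →ₗ[A] Qmod A L I,
      Function.Injective f := by
  exact ⟨{ toFun := fun x => Fmap I L I' hI' x
           map_add' := fun x y => Fmap_add I L I' hI' x y
           map_smul' := fun a x => Fmap_smul I L I' hI' a x },
    fun x y h => Fmap_inj I L I' hI' h⟩
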